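/- With the Lorentz matrix L ∈ 𝕄_{3×3} whose (k,j) entry is [δ_{kj} + (γ−1)α_k α_j]e − [βγ α_k α_j]i, and the event vector x⃗ ∈ 𝕄³ with components x_k e + α_k c t i (where (x₁,x₂,x₃) ∈ ℝ³ is the spatial position and t ∈ ℝ the time), the transformed vector x⃗' := L · x⃗ has components x'_k e + α_k c t' i, where x'_k = x_k + (γ−1)(α·x)α_k − βγ c t α_k and c t' = γ(c t − β (α·x)); i.e. L · x⃗ is consistent with the usual Lorentz transformation. -/

import Mathlib

/-!
Conjugation flips the sign of the `i`-part of every entry of `L`. Paired with the event vector,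
the `α_k α_j`-terms then sum to multiples of `α · x` and of `Σ α_j² · α_k c t`, and `Σ α_j² = 1`
turns the result into the usual boost formulas for `x'_k` and `c t'`.
-/

/-- The pseudo-complex algebra 𝕄 = ℝ² with multiplication (a,b)(c,d) = (ac−bd, ad−bc). -/
def Mmul (x y : ℝ × ℝ) : ℝ × ℝ := (x.1 * y.1 - x.2 * y.2, x.1 * y.2 - x.2 * y.1)

/-- Conjugation x* := xe = (a, −b). -/
def Mconj (x : ℝ × ℝ) : ℝ × ℝ := (x.1, -x.2)

/-- Action of a 3×3 𝕄-matrix on a vector in 𝕄³: (A · x)_k := Σ_j (a_{kj})* x_j. -/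
def MmatVec (A : Matrix (Fin 3) (Fin 3) (ℝ × ℝ)) (x : Fin 3 → ℝ × ℝ) :
    Fin 3 → ℝ × ℝ :=
  fun k => ∑ j : Fin 3, Mmul (Mconj (A k j)) (x j)

open Finset

theorem sum_sq_div_sqrt_sum_sq_eq_one {ι : Type*} [Fintype ι] {v : ι → ℝ} (hv : v ≠ 0) :
    ∑ k, (v k / √(∑ m, v m ^ 2)) ^ 2 = 1 := by
  have hpos : 0 < ∑ m, v m ^ 2 := by
    obtain ⟨k, hk⟩ := Function.ne_iff.mp hv
    exact sum_pos' (fun _ _ => sq_nonneg _) ⟨k, mem_univ k, sq_pos_of_ne_zero hk⟩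
  simp_rw [div_pow, ← sum_div, Real.sq_sqrt hpos.le]
  exact div_self hpos.ne'

theorem Mmul_Mconj (a b p q : ℝ) :
    Mmul (Mconj (a, b)) (p, q) = (a * p + b * q, a * q + b * p) := by
  simp only [Mmul, Mconj, Prod.mk.injEq]
  constructor <;> ring

theorem MmatVec_lorentz_event (α x : Fin 3 → ℝ) (hα : ∑ j, α j ^ 2 = 1) (β γ τ : ℝ) :
    ∀ k, MmatVec (fun k j => ((if k = j then (1 : ℝ) else 0) + (γ - 1) * α k * α j,
        -(β * γ * α k * α j))) (fun j => (x j, α j * τ)) k =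
      (x k + (γ - 1) * (∑ j, α j * x j) * α k - β * γ * τ * α k,
        α k * (γ * (τ - β * ∑ j, α j * x j))) := by
  intro k
  simp only [MmatVec, Mmul_Mconj, Prod.ext_iff, Prod.fst_sum, Prod.snd_sum]
  constructor
  · calc _ = ∑ j, (if k = j then x j else 0) + (γ - 1) * α k * ∑ j, α j * x j
          - β * γ * τ * α k * ∑ j, α j ^ 2 := by
          simp only [mul_sum, ← sum_add_distrib, ← sum_sub_distrib]
          refine sum_congr rfl fun j _ => ?_
          split_ifs <;> ring
      _ = _ := by rw [sum_ite_eq, if_pos (mem_univ k), hα]; ring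
  · calc _ = ∑ j, (if k = j then α j * τ else 0) + (γ - 1) * α k * τ * ∑ j, α j ^ 2
          - β * γ * α k * ∑ j, α j * x j := by
          simp only [mul_sum, ← sum_add_distrib, ← sum_sub_distrib]
          refine sum_congr rfl fun j _ => ?_
          split_ifs <;> ring
      _ = _ := by rw [sum_ite_eq, if_pos (mem_univ k), hα]; ring

theorem M_lorentz_event_general (c : ℝ) (v : Fin 3 → ℝ) (hv : v ≠ 0)
    (α : Fin 3 → ℝ) (hα : ∀ k, α k = v k / Real.sqrt (∑ m, v m ^ 2))
    (β γ : ℝ)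
    (L : Matrix (Fin 3) (Fin 3) (ℝ × ℝ))
    (hL : ∀ k j, L k j =
      ((if k = j then (1 : ℝ) else 0) + (γ - 1) * α k * α j, -(β * γ * α k * α j)))
    (x : Fin 3 → ℝ) (t : ℝ) (xv : Fin 3 → ℝ × ℝ)
    (hxv : ∀ k, xv k = (x k, α k * (c * t))) :
    ∀ k, MmatVec L xv k =
      (x k + (γ - 1) * (∑ j, α j * x j) * α k - β * γ * (c * t) * α k,
        α k * (γ * (c * t - β * ∑ j, α j * x j))) := by
  obtain rfl : L = _ := funext fun k => funext (hL k)
  obtain rfl : xv = _ := funext hxv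
  have hunit : ∑ j, α j ^ 2 = 1 := by
    simp only [hα]
    exact sum_sq_div_sqrt_sum_sq_eq_one hv
  exact MmatVec_lorentz_event α x hunit β γ (c * t)

/-- The 𝕄-Lorentz transform L·x⃗ of the event vector x⃗ (components x_k e + α_k c t i)
is consistent with the usual Lorentz transformation: its components are
x'_k e + α_k c t' i with x'_k = x_k + (γ−1)(α·x)α_k − βγct α_k and
ct' = γ(ct − β(α·x)). -/
theorem M_lorentz_event (c : ℝ) (hc : 0 < c) (v : Fin 3 → ℝ) (hv : v ≠ 0)
    (hvc : Real.sqrt (∑ k, v k ^ 2) < c)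
    (α : Fin 3 → ℝ) (hα : ∀ k, α k = v k / Real.sqrt (∑ m, v m ^ 2))
    (β γ : ℝ) (hβ : β = Real.sqrt (∑ k, v k ^ 2) / c)
    (hγ : γ = 1 / Real.sqrt (1 - β ^ 2))
    (L : Matrix (Fin 3) (Fin 3) (ℝ × ℝ))
    (hL : ∀ k j, L k j =
      ((if k = j then (1 : ℝ) else 0) + (γ - 1) * α k * α j, -(β * γ * α k * α j)))
    (x : Fin 3 → ℝ) (t : ℝ) (xv : Fin 3 → ℝ × ℝ)
    (hxv : ∀ k, xv k = (x k, α k * (c * t))) :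
    ∀ k, MmatVec L xv k =
      (x k + (γ - 1) * (∑ j, α j * x j) * α k - β * γ * (c * t) * α k,
        α k * (γ * (c * t - β * ∑ j, α j * x j))) :=
  M_lorentz_event_general c v hv α hα β γ L hL x t xv hxv
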